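/- For every permutation π ∈ S_n: S(π) ≤ 2 Σ_{i=1}^{n} cost(p*(i, π(i))). -/

import Mathlib

variable {n : ℕ}

/-- The minimum `φ`-cost over all transposition decompositions of `π`. -/
noncomputable def Mcost (φ : Fin n → Fin n → ℝ) (π : Equiv.Perm (Fin n)) : ℝ :=
  sInf {c : ℝ | ∃ l : List (Fin n × Fin n), (∀ p ∈ l, p.1 ≠ p.2) ∧
    (l.map fun p => Equiv.swap p.1 p.2).prod = π ∧
    (l.map fun p => φ p.1 p.2).sum = c}

/-- The optimized cost `φ*(a,b) = M_φ(swap a b)` for `a ≠ b`, and `φ*(a,a) = 0`. -/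
noncomputable def optCost (φ : Fin n → Fin n → ℝ) (a b : Fin n) : ℝ :=
  if a = b then 0 else Mcost φ (Equiv.swap a b)

/-- `S(σ) = Σ_{i ∈ supp σ} φ*(i, σ i) − max_{i ∈ supp σ} φ*(i, σ i)` for a cycle `σ`. -/
noncomputable def Scost (φ : Fin n → Fin n → ℝ) (σ : Equiv.Perm (Fin n)) : ℝ :=
  (∑ i ∈ σ.support, optCost φ i (σ i)) -
    sSup ((fun i => optCost φ i (σ i)) '' (↑σ.support : Set (Fin n)))

/-- `S(π) = Σ_t S(σ_t)`, the sum over the nontrivial cycles `σ_t` of `π`. -/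
noncomputable def Sperm (φ : Fin n → Fin n → ℝ) (π : Equiv.Perm (Fin n)) : ℝ :=
  ∑ σ ∈ π.cycleFactorsFinset, Scost φ σ

/-- `p` is a path from `a` to `b`: a list of pairwise distinct elements starting
at `a` and ending at `b`. -/
def IsPathList (p : List (Fin n)) (a b : Fin n) : Prop :=
  p.Nodup ∧ p.head? = some a ∧ p.getLast? = some b

/-- The cost of a path: the sum of `φ` over consecutive pairs. -/
noncomputable def pathCost (φ : Fin n → Fin n → ℝ) (p : List (Fin n)) : ℝ :=
  ((p.zip p.tail).map fun q => φ q.1 q.2).sum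

/-- `cost(p*(a,b))`: the minimum cost over all paths from `a` to `b`,
with `cost(p*(a,a)) = 0`. -/
noncomputable def minPathCost (φ : Fin n → Fin n → ℝ) (a b : Fin n) : ℝ :=
  if a = b then 0
  else sInf {c : ℝ | ∃ p : List (Fin n), IsPathList p a b ∧ pathCost φ p = c}

/-!
Write `φ*` for the optimized cost and `p*` for a cheapest path. For a cycle `σ`, `S(σ)` is at
most the sum of `φ*(i, σ i)` over its support, because the subtracted maximum is nonnegative;
summing over the disjoint cycles gives `S(π) ≤ Σ_i φ*(i, π i)`. It then suffices that
`φ*(a, b) ≤ 2 cost(p*(a, b))`: along a path `a, c, …, b` one has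
`swap a b = swap a c * swap c b * swap a c`, so the first edge is paid twice on top of a
decomposition of `swap c b` obtained recursively from the rest of the path.
-/

open Finset Equiv

variable {φ : Fin n → Fin n → ℝ}

theorem swapListCost_nonneg (hnn : ∀ a b : Fin n, a ≠ b → 0 ≤ φ a b)
    {l : List (Fin n × Fin n)} (hl : ∀ p ∈ l, p.1 ≠ p.2) :
    0 ≤ (l.map fun p => φ p.1 p.2).sum :=
  List.sum_nonneg fun x hx => by
    obtain ⟨q, hq, rfl⟩ := List.mem_map.mp hx
    exact hnn _ _ (hl q hq)

theorem Mcost_nonneg (hnn : ∀ a b : Fin n, a ≠ b → 0 ≤ φ a b) (π : Perm (Fin n)) :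
    0 ≤ Mcost φ π :=
  Real.sInf_nonneg fun _ ⟨_, hl, _, hc⟩ => hc ▸ swapListCost_nonneg hnn hl

theorem Mcost_le (hnn : ∀ a b : Fin n, a ≠ b → 0 ≤ φ a b) {π : Perm (Fin n)}
    {l : List (Fin n × Fin n)} (hl : ∀ p ∈ l, p.1 ≠ p.2)
    (hprod : (l.map fun p => swap p.1 p.2).prod = π) :
    Mcost φ π ≤ (l.map fun p => φ p.1 p.2).sum :=
  csInf_le ⟨0, fun _ ⟨_, hl', _, hc⟩ => hc ▸ swapListCost_nonneg hnn hl'⟩ ⟨l, hl, hprod, rfl⟩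

theorem optCost_nonneg (hnn : ∀ a b : Fin n, a ≠ b → 0 ≤ φ a b) (a b : Fin n) :
    0 ≤ optCost φ a b := by
  unfold optCost
  split_ifs
  exacts [le_rfl, Mcost_nonneg hnn _]

theorem pathCost_cons_cons (a c : Fin n) (t : List (Fin n)) :
    pathCost φ (a :: c :: t) = φ a c + pathCost φ (c :: t) := by
  simp [pathCost]

theorem pathCost_nonneg (hnn : ∀ a b : Fin n, a ≠ b → 0 ≤ φ a b) :
    ∀ {p : List (Fin n)}, p.Nodup → 0 ≤ pathCost φ p
  | [], _ | [_], _ => by simp [pathCost]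
  | a :: c :: t, hp => by
    rw [pathCost_cons_cons]
    have hac : a ≠ c := by simp_all
    exact add_nonneg (hnn a c hac) (pathCost_nonneg hnn hp.of_cons)

theorem exists_swap_decomposition_of_isPathList (hnn : ∀ a b : Fin n, a ≠ b → 0 ≤ φ a b) :
    ∀ {p : List (Fin n)} {a b : Fin n}, IsPathList p a b → a ≠ b →
      ∃ l : List (Fin n × Fin n), (∀ q ∈ l, q.1 ≠ q.2) ∧
        (l.map fun q => swap q.1 q.2).prod = swap a b ∧
        (l.map fun q => φ q.1 q.2).sum ≤ 2 * pathCost φ p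
  | [], _, _, ⟨_, hhead, _⟩, _ => by simp at hhead
  | [_], _, _, ⟨_, hhead, hlast⟩, hab => by simp_all
  | x :: c :: t, a, b, ⟨hnd, hhead, hlast⟩, hab => by
    obtain rfl : x = a := by simpa using hhead
    have hac : x ≠ c := by simp_all
    have hrest : 0 ≤ pathCost φ (c :: t) := pathCost_nonneg hnn hnd.of_cons
    rw [pathCost_cons_cons]
    by_cases hcb : c = b
    · subst hcb
      refine ⟨[(x, c)], by simpa using hac, by simp, ?_⟩
      simp only [List.map_cons, List.map_nil, List.sum_cons, List.sum_nil, add_zero]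
      linarith [hnn x c hac]
    · have hpath : IsPathList (c :: t) c b := ⟨hnd.of_cons, rfl, by simpa using hlast⟩
      obtain ⟨l, hl, hprod, hcost⟩ :=
        exists_swap_decomposition_of_isPathList hnn hpath hcb
      refine ⟨(x, c) :: (l ++ [(x, c)]), ?_, ?_, ?_⟩
      · simp only [List.mem_cons, List.mem_append, List.not_mem_nil]
        rintro q (rfl | hq | rfl | hnil)
        exacts [hac, hl q hq, hac, hnil.elim]
      · simp only [List.map_cons, List.map_append, List.prod_cons, List.prod_append,
          List.map_nil, List.prod_nil, mul_one, hprod]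
        rw [← mul_assoc, swap_comm x c, swap_comm c b,
          swap_mul_swap_mul_swap (Ne.symm hcb) (Ne.symm hab)]
      · simp only [List.map_cons, List.map_append, List.sum_cons, List.sum_append,
          List.map_nil, List.sum_nil, add_zero]
        linarith

theorem optCost_le_two_mul_minPathCost (hnn : ∀ a b : Fin n, a ≠ b → 0 ≤ φ a b)
    (a b : Fin n) : optCost φ a b ≤ 2 * minPathCost φ a b := by
  rcases eq_or_ne a b with rfl | hab
  · simp [optCost, minPathCost]
  rw [optCost, minPathCost, if_neg hab, if_neg hab, ← div_le_iff₀' two_pos]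
  refine le_csInf ⟨_, [a, b], ⟨by simp [hab], rfl, rfl⟩, rfl⟩ ?_
  rintro _ ⟨p, hp, rfl⟩
  obtain ⟨l, hl, hprod, hcost⟩ := exists_swap_decomposition_of_isPathList hnn hp hab
  rw [div_le_iff₀' two_pos]
  exact (Mcost_le hnn hl hprod).trans hcost

theorem Scost_le_sum_optCost (hnn : ∀ a b : Fin n, a ≠ b → 0 ≤ φ a b) (σ : Perm (Fin n)) :
    Scost φ σ ≤ ∑ i ∈ σ.support, optCost φ i (σ i) :=
  sub_le_self _ <| Real.sSup_nonneg <| by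
    rintro _ ⟨i, -, rfl⟩
    exact optCost_nonneg hnn i (σ i)

theorem Sperm_le_sum_optCost (hnn : ∀ a b : Fin n, a ≠ b → 0 ≤ φ a b) (π : Perm (Fin n)) :
    Sperm φ π ≤ ∑ i, optCost φ i (π i) :=
  calc Sperm φ π ≤ ∑ σ ∈ π.cycleFactorsFinset, ∑ i ∈ σ.support, optCost φ i (π i) := by
        refine sum_le_sum fun σ hσ => (Scost_le_sum_optCost hnn σ).trans_eq ?_
        refine sum_congr rfl fun i hi => ?_
        rw [(Perm.mem_cycleFactorsFinset_iff.mp hσ).2 i hi]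
    _ = ∑ i ∈ π.cycleFactorsFinset.biUnion Perm.support, optCost φ i (π i) := by
        refine (sum_biUnion fun σ hσ τ hτ hστ => ?_).symm
        exact Perm.disjoint_iff_disjoint_support.mp
          (Perm.cycleFactorsFinset_pairwise_disjoint π hσ hτ hστ)
    _ ≤ ∑ i, optCost φ i (π i) :=
        sum_le_sum_of_subset_of_nonneg (subset_univ _) fun i _ _ => optCost_nonneg hnn i (π i)

theorem stmt14_general (φ : Fin n → Fin n → ℝ)
    (hnn : ∀ a b : Fin n, a ≠ b → 0 ≤ φ a b)
    (π : Equiv.Perm (Fin n)) :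
    Sperm φ π ≤ 2 * ∑ i : Fin n, minPathCost φ i (π i) := by
  rw [mul_sum]
  exact (Sperm_le_sum_optCost hnn π).trans
    (sum_le_sum fun i _ => optCost_le_two_mul_minPathCost hnn i (π i))

/-- for every permutation `π`,
`S(π) ≤ 2 Σ_i cost(p*(i, π i))`. -/
theorem stmt14 (φ : Fin n → Fin n → ℝ)
    (hnn : ∀ a b : Fin n, a ≠ b → 0 ≤ φ a b)
    (hsym : ∀ a b : Fin n, φ a b = φ b a)
    (π : Equiv.Perm (Fin n)) :
    Sperm φ π ≤ 2 * ∑ i : Fin n, minPathCost φ i (π i) :=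
  stmt14_general φ hnn π
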